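/- arXiv:2306.10178 — 6 statements merged into one kernel-verified Lean document; each statement's English description precedes it below -/
import Mathlib

section
/- Let $T_R, \tau_1 > 0$ and $n > 0$. Then the function $h(x) = x/(T_R + \tau_1/\sqrt{n-x})$ is concave on the interval $[0, n)$. -/
open Real Set

theorem concave_throughput (T_R τ1 n : ℝ) (hT : 0 < T_R) (hτ : 0 < τ1) (hn : 0 < n) :
    ConcaveOn ℝ (Set.Ico (0:ℝ) n)
      (fun x => x / (T_R + τ1 / Real.sqrt (n - x))) := by
  set f' : ℝ → ℝ := fun x =>
    (T_R * (n - x) + τ1 * Real.sqrt (n - x) - x * τ1 / (2 * Real.sqrt (n - x))) /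
      (T_R * Real.sqrt (n - x) + τ1) ^ 2 with hf'def
  set f'' : ℝ → ℝ := fun x =>
    -((T_R * τ1 + τ1 ^ 2 / Real.sqrt (n - x) + 3 * x * T_R * τ1 / (4 * Real.sqrt (n - x) ^ 2)
        + x * τ1 ^ 2 / (4 * Real.sqrt (n - x) ^ 3)) / (T_R * Real.sqrt (n - x) + τ1) ^ 3)
    with hf''def
  -- derivative of sqrt(n - y)
  have hds : ∀ x ∈ Set.Ioo (0:ℝ) n,
      HasDerivAt (fun y => Real.sqrt (n - y)) (-(2 * Real.sqrt (n - x))⁻¹) x := by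
    intro x hx
    have hnx : (0:ℝ) < n - x := sub_pos.2 hx.2
    have h1 : HasDerivAt (fun y : ℝ => n - y) (-1) x := (hasDerivAt_id x).const_sub n
    have h2 := (Real.hasDerivAt_sqrt hnx.ne').comp x h1
    refine h2.congr_deriv (Eq.symm ?_)
    ring
  -- first derivative
  have hd1 : ∀ x ∈ Set.Ioo (0:ℝ) n,
      HasDerivAt (fun y => y / (T_R + τ1 / Real.sqrt (n - y))) (f' x) x := by
    intro x hx
    have hnx : (0:ℝ) < n - x := sub_pos.2 hx.2
    set s := Real.sqrt (n - x) with hsdef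
    have hs : 0 < s := Real.sqrt_pos.2 hnx
    have hs2 : s ^ 2 = n - x := Real.sq_sqrt hnx.le
    have hv0 : 0 < T_R + τ1 / s := by positivity
    have hv : HasDerivAt (fun y => T_R + τ1 / Real.sqrt (n - y))
        ((0 * s - τ1 * (-(2 * s)⁻¹)) / s ^ 2) x :=
      ((hasDerivAt_const x τ1).div (hds x hx) hs.ne').const_add T_R
    have h := (hasDerivAt_id x).div hv hv0.ne'
    refine h.congr_deriv (Eq.symm ?_)
    show (T_R * (n - x) + τ1 * s - x * τ1 / (2 * s)) / (T_R * s + τ1) ^ 2 = _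
    rw [← hs2]
    simp only [id_eq]
    rw [Real.sqrt_sq hs.le]
    field_simp
    ring
  -- second derivative
  have hd2 : ∀ x ∈ Set.Ioo (0:ℝ) n, HasDerivAt f' (f'' x) x := by
    intro x hx
    have hnx : (0:ℝ) < n - x := sub_pos.2 hx.2
    set s := Real.sqrt (n - x) with hsdef
    have hs : 0 < s := Real.sqrt_pos.2 hnx
    have hs2 : s ^ 2 = n - x := Real.sq_sqrt hnx.le
    have hD0 : 0 < T_R * s + τ1 := by positivity
    have hA : HasDerivAt (fun y : ℝ => T_R * (n - y)) (T_R * (-1)) x :=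
      ((hasDerivAt_id x).const_sub n).const_mul T_R
    have hB : HasDerivAt (fun y => τ1 * Real.sqrt (n - y)) (τ1 * (-(2 * s)⁻¹)) x :=
      (hds x hx).const_mul τ1
    have hC : HasDerivAt (fun y => y * τ1 / (2 * Real.sqrt (n - y)))
        ((1 * τ1 * (2 * s) - x * τ1 * (2 * (-(2 * s)⁻¹))) / (2 * s) ^ 2) x :=
      ((hasDerivAt_id x).mul_const τ1).div ((hds x hx).const_mul 2) (by positivity)
    have hN := (hA.add hB).sub hC
    have hDin : HasDerivAt (fun y => T_R * Real.sqrt (n - y) + τ1) (T_R * (-(2 * s)⁻¹)) x :=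
      ((hds x hx).const_mul T_R).add_const τ1
    have hD2 := hDin.pow 2
    have hraw := hN.div hD2 (by simp only [Pi.pow_apply]; positivity)
    refine hraw.congr_deriv (Eq.symm ?_)
    show -((T_R * τ1 + τ1 ^ 2 / s + 3 * x * T_R * τ1 / (4 * s ^ 2)
        + x * τ1 ^ 2 / (4 * s ^ 3)) / (T_R * s + τ1) ^ 3) = _
    simp only [Pi.pow_apply, Pi.add_apply, Pi.sub_apply, Pi.div_apply, ← hsdef]
    rw [← hs2]
    push_cast
    field_simp
    ring
  -- nonpositivity of the second derivative
  have hnp : ∀ x ∈ Set.Ioo (0:ℝ) n, f'' x ≤ 0 := by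
    intro x hx
    have hnx : (0:ℝ) < n - x := sub_pos.2 hx.2
    have hs : 0 < Real.sqrt (n - x) := Real.sqrt_pos.2 hnx
    have hx0 : 0 < x := hx.1
    show -((T_R * τ1 + τ1 ^ 2 / Real.sqrt (n - x) + 3 * x * T_R * τ1 / (4 * Real.sqrt (n - x) ^ 2)
        + x * τ1 ^ 2 / (4 * Real.sqrt (n - x) ^ 3)) / (T_R * Real.sqrt (n - x) + τ1) ^ 3) ≤ 0
    have : 0 < (T_R * τ1 + τ1 ^ 2 / Real.sqrt (n - x) + 3 * x * T_R * τ1 / (4 * Real.sqrt (n - x) ^ 2)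
        + x * τ1 ^ 2 / (4 * Real.sqrt (n - x) ^ 3)) / (T_R * Real.sqrt (n - x) + τ1) ^ 3 := by
      positivity
    linarith
  -- continuity on [0, n)
  have hcont : ContinuousOn (fun x => x / (T_R + τ1 / Real.sqrt (n - x))) (Set.Ico (0:ℝ) n) := by
    apply ContinuousOn.div continuousOn_id
    · apply ContinuousOn.add continuousOn_const
      apply ContinuousOn.div continuousOn_const
      · exact (Real.continuous_sqrt.comp (continuous_const.sub continuous_id)).continuousOn
      · intro x hx
        exact (Real.sqrt_pos.2 (sub_pos.2 hx.2)).ne'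
    · intro x hx
      have hs : 0 < Real.sqrt (n - x) := Real.sqrt_pos.2 (sub_pos.2 hx.2)
      positivity
  have hint : interior (Set.Ico (0:ℝ) n) = Set.Ioo 0 n := interior_Ico
  exact concaveOn_of_hasDerivWithinAt2_nonpos (convex_Ico 0 n) hcont
    (fun x hx => ((hd1 x (hint ▸ hx)).hasDerivWithinAt))
    (fun x hx => ((hd2 x (hint ▸ hx)).hasDerivWithinAt))
    (fun x hx => hnp x (hint ▸ hx))
end

section
/- Suppose nonnegative reals $\bar{q}, \bar{c}_C, \bar{c}_I, \bar{c}_{DC}$ satisfy $n = \bar{q} + \bar{c}_C + \bar{c}_I + \bar{c}_{DC}$ and the balance equation $\bar{c}_C \cdot r_c = (n - \bar{c}_C - \bar{c}_I) \cdot r_d$ with $r_c, r_d > 0$, and suppose $\bar{q} \geq T_R \alpha \lambda$ for some $T_R, \alpha, \lambda > 0$. Then, with $r = r_d/r_c$, it holds that $n \geq (1+r) T_R \alpha \lambda$. -/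
/-!
The balance equation forces the charging fleet to be at least `r` times the fleet on the road:
`n - c_C - c_I = q + c_DC ≥ q`, so `c_C * r_c ≥ q * r_d`. Hence `n ≥ q + c_C ≥ (1 + r) q`, and the
service requirement `q ≥ T_R α λ` finishes the bound.
-/

section

variable {K : Type*} [Field K] [LinearOrder K] [IsStrictOrderedRing K]

theorem mul_div_le_of_balance {q cC cDC rc rd : K} (hrc : 0 < rc) (hrd : 0 ≤ rd) (hcDC : 0 ≤ cDC)
    (hbal : cC * rc = (q + cDC) * rd) : q * (rd / rc) ≤ cC := by
  rw [← mul_div_assoc, div_le_iff₀ hrc, hbal]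
  exact mul_le_mul_of_nonneg_right (le_add_of_nonneg_right hcDC) hrd

theorem one_add_mul_le_of_balance {n q cC cI cDC rc rd : K} (hrc : 0 < rc) (hrd : 0 ≤ rd)
    (hcI : 0 ≤ cI) (hcDC : 0 ≤ cDC) (hsum : n = q + cC + cI + cDC)
    (hbal : cC * rc = (n - cC - cI) * rd) : (1 + rd / rc) * q ≤ n := by
  have hcharging : q * (rd / rc) ≤ cC :=
    mul_div_le_of_balance hrc hrd hcDC (by rw [hbal, hsum]; ring)
  linarith

end

theorem first_order_fleet_lower_bound_general
    (n q cC cI cDC rc rd TR α lam : ℝ)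
    (hcI : 0 ≤ cI) (hcDC : 0 ≤ cDC)
    (hrc : 0 < rc) (hrd : 0 < rd)
    (hsum : n = q + cC + cI + cDC)
    (hbal : cC * rc = (n - cC - cI) * rd)
    (hqge : q ≥ TR * α * lam) :
    n ≥ (1 + rd / rc) * TR * α * lam :=
  calc (1 + rd / rc) * TR * α * lam = (1 + rd / rc) * (TR * α * lam) := by ring
    _ ≤ (1 + rd / rc) * q := mul_le_mul_of_nonneg_left hqge (by positivity)
    _ ≤ n := one_add_mul_le_of_balance hrc hrd.le hcI hcDC hsum hbal

theorem first_order_fleet_lower_bound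
    (n q cC cI cDC rc rd TR α lam : ℝ)
    (hq : 0 ≤ q) (hcC : 0 ≤ cC) (hcI : 0 ≤ cI) (hcDC : 0 ≤ cDC)
    (hrc : 0 < rc) (hrd : 0 < rd) (hTR : 0 < TR) (hα : 0 < α) (hlam : 0 < lam)
    (hsum : n = q + cC + cI + cDC)
    (hbal : cC * rc = (n - cC - cI) * rd)
    (hqge : q ≥ TR * α * lam) :
    n ≥ (1 + rd / rc) * TR * α * lam :=
  first_order_fleet_lower_bound_general n q cC cI cDC rc rd TR α lam hcI hcDC hrc hrd hsum hbal hqge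
end

section
/- Suppose nonnegative reals $\bar{q}, \bar{c}_C, \bar{c}_I, \bar{c}_{DC}$ satisfy $n = \bar{q} + \bar{c}_C + \bar{c}_I + \bar{c}_{DC}$, the charge balance $\bar{c}_C r_c = (n - \bar{c}_C - \bar{c}_I) r_d$, the charger constraint $m \geq \bar{c}_C + \left(\frac{r_c \tau_2 \bar{c}_C}{p^\star \bar{c}_{DC}}\right)^2$ (interpreted as $m \geq \bar{c}_C$ when $\bar{c}_{DC}$ makes the second term undefined), and $\bar{q} \geq T_R \alpha \lambda$. Then $m \geq r T_R \alpha \lambda$ where $r = r_d/r_c$. -/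
/-! The charge balance forces `cC * rc = (q + cDC) * rd ≥ TR * α * lam * rd`, so the charging
vehicles alone already number at least `r * TR * α * lam`; the quadratic term of the charger
constraint is only ever dropped. -/

lemma charge_balance_of_sum {n q cC cI cDC rc rd : ℝ} (hsum : n = q + cC + cI + cDC)
    (hbal : cC * rc = (n - cC - cI) * rd) : cC * rc = (q + cDC) * rd := by
  rw [hbal, hsum]
  ring

lemma div_mul_le_of_mul_eq_add_mul {c rc rd q d x : ℝ} (hrc : 0 < rc) (hrd : 0 ≤ rd)
    (hd : 0 ≤ d) (hxq : x ≤ q) (hbal : c * rc = (q + d) * rd) : rd / rc * x ≤ c := by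
  rw [div_mul_eq_mul_div, div_le_iff₀ hrc, hbal, mul_comm rd x]
  exact mul_le_mul_of_nonneg_right (by linarith) hrd

theorem first_order_charger_lower_bound_general
    (n m q cC cI cDC rc rd TR α lam τ2 pstar : ℝ)
    (hcDC : 0 ≤ cDC)
    (hrc : 0 < rc) (hrd : 0 < rd)
    (hsum : n = q + cC + cI + cDC)
    (hbal : cC * rc = (n - cC - cI) * rd)
    (hm : m ≥ cC + (rc * τ2 * cC / (pstar * cDC)) ^ 2)
    (hqge : q ≥ TR * α * lam) :
    m ≥ (rd / rc) * TR * α * lam := by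
  have hcharging : rd / rc * (TR * α * lam) ≤ cC :=
    div_mul_le_of_mul_eq_add_mul hrc hrd.le hcDC hqge (charge_balance_of_sum hsum hbal)
  have hchargers : cC ≤ m := by
    linarith [sq_nonneg (rc * τ2 * cC / (pstar * cDC))]
  calc (rd / rc) * TR * α * lam = rd / rc * (TR * α * lam) := by ring
    _ ≤ cC := hcharging
    _ ≤ m := hchargers

theorem first_order_charger_lower_bound
    (n m q cC cI cDC rc rd TR α lam τ2 pstar : ℝ)
    (hq : 0 ≤ q) (hcC : 0 ≤ cC) (hcI : 0 ≤ cI) (hcDC : 0 ≤ cDC)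
    (hrc : 0 < rc) (hrd : 0 < rd) (hTR : 0 < TR) (hα : 0 < α) (hlam : 0 < lam)
    (hτ2 : 0 < τ2) (hp : 0 < pstar)
    (hsum : n = q + cC + cI + cDC)
    (hbal : cC * rc = (n - cC - cI) * rd)
    (hm : m ≥ cC + (rc * τ2 * cC / (pstar * cDC)) ^ 2)
    (hqge : q ≥ TR * α * lam) :
    m ≥ (rd / rc) * TR * α * lam :=
  first_order_charger_lower_bound_general n m q cC cI cDC rc rd TR α lam τ2 pstar hcDC hrc hrd hsum
    hbal hm hqge
end

section
/- Let $q : [0,\infty) \to [0,n]$ be differentiable with $\dot q(t) = \lambda_{\mathrm{eff}}(t) - \frac{q(t)}{T_R + T_P(t)}$, where $0 \leq \lambda_{\mathrm{eff}}(t) \leq \lambda$, $T_P(t) \geq \tau_1/\sqrt{n - q(t)}$, and $q(t) < n$ for all $t$. Suppose the long-run averages $\bar{q} = \lim_{T\to\infty} \frac{1}{T}\int_0^T q(t)\,dt$ and $\bar{\alpha}\lambda = \limsup_{T\to\infty}\frac{1}{T}\int_0^T \lambda_{\mathrm{eff}}(t)\,dt$ exist. Then $\bar{q} \geq \bar{\alpha}\lambda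 \left(T_R + \frac{\tau_1}{\sqrt{n - \bar{q}}}\right)$. -/
noncomputable def llawA (n TR τ1 x : ℝ) : ℝ :=
  Real.sqrt (n - x) / (TR * Real.sqrt (n - x) + τ1)
    - x * τ1 / (2 * Real.sqrt (n - x) * (TR * Real.sqrt (n - x) + τ1) ^ 2)

lemma llaw_hasDerivAt (n TR τ1 : ℝ) (hTR : 0 < TR) (hτ : 0 < τ1) {x : ℝ} (hx : x < n) :
    HasDerivAt (fun y => y / (TR + τ1 / Real.sqrt (n - y))) (llawA n TR τ1 x) x := by
  have hnx : 0 < n - x := by linarith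
  have hu : 0 < Real.sqrt (n - x) := Real.sqrt_pos.2 hnx
  have h1 : HasDerivAt (fun y : ℝ => n - y) (-1) x := (hasDerivAt_id x).const_sub n
  have h2 : HasDerivAt (fun y => Real.sqrt (n - y)) (1 / (2 * Real.sqrt (n - x)) * (-1)) x :=
    (Real.hasDerivAt_sqrt (ne_of_gt hnx)).comp x h1
  have h3 : HasDerivAt (fun y => τ1 / Real.sqrt (n - y))
      ((0 * Real.sqrt (n - x) - τ1 * (1 / (2 * Real.sqrt (n - x)) * (-1))) / (Real.sqrt (n - x)) ^ 2) x :=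
    (hasDerivAt_const x τ1).div h2 (ne_of_gt hu)
  have h4 := h3.const_add TR
  have hden : TR + τ1 / Real.sqrt (n - x) ≠ 0 := by positivity
  have h5 : HasDerivAt (fun y => y / (TR + τ1 / Real.sqrt (n - y))) _ x := (hasDerivAt_id' x).div h4 hden
  convert h5 using 1
  unfold llawA
  generalize Real.sqrt (n - x) = u at hu ⊢
  have h2' : TR * u + τ1 ≠ 0 := by positivity
  have h3' : TR + τ1 / u ≠ 0 := by positivity
  field_simp
  ring

lemma llawA_antitone (n TR τ1 : ℝ) (hTR : 0 < TR) (hτ : 0 < τ1) {x y : ℝ}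
    (hx : 0 ≤ x) (hxy : x ≤ y) (hy : y < n) : llawA n TR τ1 y ≤ llawA n TR τ1 x := by
  have hny : 0 < n - y := by linarith
  set u := Real.sqrt (n - x) with hudef
  set v := Real.sqrt (n - y) with hvdef
  have hv : 0 < v := Real.sqrt_pos.2 hny
  have hvu : v ≤ u := Real.sqrt_le_sqrt (by linarith)
  have hu : 0 < u := lt_of_lt_of_le hv hvu
  unfold llawA
  rw [← hudef, ← hvdef]
  have t1 : v / (TR * v + τ1) ≤ u / (TR * u + τ1) := by
    rw [div_le_div_iff₀ (by positivity) (by positivity)]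
    nlinarith
  have t2 : x * τ1 / (2 * u * (TR * u + τ1) ^ 2) ≤ y * τ1 / (2 * v * (TR * v + τ1) ^ 2) := by
    have hw : (TR * v + τ1) ^ 2 ≤ (TR * u + τ1) ^ 2 := by
      apply pow_le_pow_left₀ (by positivity) (by nlinarith)
    have hden : 2 * v * (TR * v + τ1) ^ 2 ≤ 2 * u * (TR * u + τ1) ^ 2 := by nlinarith
    exact div_le_div₀ (mul_nonneg (hx.trans hxy) hτ.le) (by nlinarith) (by positivity) hden
  linarith

lemma llaw_tangent (n TR τ1 : ℝ) (hTR : 0 < TR) (hτ : 0 < τ1) {x y : ℝ}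
    (hx0 : 0 ≤ x) (hxn : x < n) (hy0 : 0 ≤ y) (hyn : y < n) :
    x / (TR + τ1 / Real.sqrt (n - x)) ≤
      y / (TR + τ1 / Real.sqrt (n - y)) + llawA n TR τ1 y * (x - y) := by
  set f : ℝ → ℝ := fun z => z / (TR + τ1 / Real.sqrt (n - z)) with hf
  have hcont : ∀ z, z < n → ContinuousAt f z := fun z hz =>
    (llaw_hasDerivAt n TR τ1 hTR hτ hz).continuousAt
  rcases lt_trichotomy x y with h | h | h
  · obtain ⟨c, hc, hceq⟩ := exists_hasDerivAt_eq_slope f (llawA n TR τ1) h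
      (fun z hz => (hcont z (lt_of_le_of_lt hz.2 hyn)).continuousWithinAt)
      (fun z hz => llaw_hasDerivAt n TR τ1 hTR hτ (lt_trans hz.2 hyn))
    have hAc : llawA n TR τ1 y ≤ llawA n TR τ1 c :=
      llawA_antitone n TR τ1 hTR hτ (le_of_lt (lt_of_le_of_lt hx0 hc.1)) (le_of_lt hc.2) hyn
    rw [hceq] at hAc
    have := (le_div_iff₀ (by linarith : (0:ℝ) < y - x)).1 hAc
    have hr : llawA n TR τ1 y * (x - y) = -(llawA n TR τ1 y * (y - x)) := by ring
    linarith
  · subst h; simp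
  · obtain ⟨c, hc, hceq⟩ := exists_hasDerivAt_eq_slope f (llawA n TR τ1) h
      (fun z hz => (hcont z (lt_of_le_of_lt hz.2 hxn)).continuousWithinAt)
      (fun z hz => llaw_hasDerivAt n TR τ1 hTR hτ (lt_trans hz.2 hxn))
    have hAc : llawA n TR τ1 c ≤ llawA n TR τ1 y :=
      llawA_antitone n TR τ1 hTR hτ hy0 (le_of_lt hc.1) (lt_trans hc.2 hxn)
    rw [hceq] at hAc
    have := (div_le_iff₀ (by linarith : (0:ℝ) < x - y)).1 hAc
    linarith
open Filter MeasureTheory in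
lemma llaw_key (n lam TR τ1 : ℝ) (hn : 0 < n) (hTR : 0 < TR) (hτ : 0 < τ1)
    (q lamEff TP : ℝ → ℝ) (qbar ᾱ : ℝ)
    (hq : ∀ t, 0 ≤ t → 0 ≤ q t ∧ q t < n)
    (hderiv : ∀ t, 0 ≤ t → HasDerivAt q (lamEff t - q t / (TR + TP t)) t)
    (hlamEff : ∀ t, 0 ≤ t → 0 ≤ lamEff t ∧ lamEff t ≤ lam)
    (hTP : ∀ t, 0 ≤ t → TP t ≥ τ1 / Real.sqrt (n - q t))
    (hqbar : Tendsto (fun T => (1 / T) * ∫ t in (0:ℝ)..T, q t) atTop (nhds qbar))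
    (hα : Tendsto (fun T => (1 / T) * ∫ t in (0:ℝ)..T, lamEff t) atTop (nhds (ᾱ * lam)))
    (a b : ℝ)
    (hab : ∀ t, 0 ≤ t → q t / (TR + TP t) ≤ a * q t + b)
    (hnn : 0 ≤ a * qbar + b) : ᾱ * lam ≤ a * qbar + b := by
  have hTPpos : ∀ t, 0 ≤ t → 0 < TR + TP t := by
    intro t ht
    have h1 := hTP t ht
    have h2 : 0 < τ1 / Real.sqrt (n - q t) := by
      have h3 : 0 < Real.sqrt (n - q t) := Real.sqrt_pos.2 (by linarith [(hq t ht).2])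
      positivity
    linarith
  have hg0 : ∀ t, 0 ≤ t → 0 ≤ q t / (TR + TP t) := fun t ht =>
    div_nonneg (hq t ht).1 (hTPpos t ht).le
  have hgub : ∀ t, 0 ≤ t → q t / (TR + TP t) ≤ n / TR := by
    intro t ht
    have h1 : 0 ≤ τ1 / Real.sqrt (n - q t) := div_nonneg hτ.le (Real.sqrt_nonneg (n - q t))
    have h2 : TR ≤ TR + TP t := by linarith [hTP t ht]
    exact div_le_div₀ hn.le (by linarith [(hq t ht).2]) hTR h2
  have hd : ∀ t, 0 ≤ t → deriv q t = lamEff t - q t / (TR + TP t) := fun t ht =>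
    (hderiv t ht).deriv
  have hdbound : ∀ t, 0 ≤ t → ‖deriv q t‖ ≤ lam + n / TR := by
    intro t ht
    rw [hd t ht, Real.norm_eq_abs, abs_le]
    have h1 := hlamEff t ht
    have h2 := hg0 t ht
    have h3 := hgub t ht
    have h4 : 0 < n / TR := by positivity
    constructor <;> linarith
  have hqc : ∀ t, 0 ≤ t → ContinuousAt q t := fun t ht => (hderiv t ht).continuousAt
  have hqInt : ∀ T, 0 ≤ T → IntervalIntegrable q volume 0 T := by
    intro T hT
    apply ContinuousOn.intervalIntegrable
    rw [Set.uIcc_of_le hT]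
    exact fun t ht => (hqc t ht.1).continuousWithinAt
  have hdInt : ∀ T, 0 ≤ T → IntervalIntegrable (deriv q) volume 0 T := by
    intro T hT
    rw [intervalIntegrable_iff_integrableOn_Icc_of_le hT]
    apply Integrable.mono' (integrable_const (lam + n / TR))
      ((measurable_deriv q).aestronglyMeasurable)
    filter_upwards [ae_restrict_mem measurableSet_Icc] with t ht
    exact hdbound t ht.1
  by_cases hI : ∀ T, 0 ≤ T → IntervalIntegrable lamEff volume 0 T
  · -- integrable case
    have key : ∀ T, 1 ≤ T → (1/T) * ∫ t in (0:ℝ)..T, lamEff t ≤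
        (1/T) * (q T - q 0) + a * ((1/T) * ∫ t in (0:ℝ)..T, q t) + b := by
      intro T hT1
      have hT : (0:ℝ) ≤ T := by linarith
      have hTpos : (0:ℝ) < T := by linarith
      have hFTC : ∫ t in (0:ℝ)..T, deriv q t = q T - q 0 := by
        apply intervalIntegral.integral_eq_sub_of_hasDerivAt _ (hdInt T hT)
        intro t ht
        rw [Set.uIcc_of_le hT] at ht
        have h := hderiv t ht.1
        rw [← hd t ht.1] at h
        exact h
      have hsubInt : IntervalIntegrable (fun t => lamEff t - deriv q t) volume 0 T :=
        (hI T hT).sub (hdInt T hT)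
      have haffInt : IntervalIntegrable (fun t => a * q t + b) volume 0 T :=
        ((hqInt T hT).const_mul a).add intervalIntegrable_const
      have hmono : (∫ t in (0:ℝ)..T, (lamEff t - deriv q t)) ≤
          ∫ t in (0:ℝ)..T, (a * q t + b) := by
        apply intervalIntegral.integral_mono_on hT hsubInt haffInt
        intro t ht
        have h1 := hd t ht.1
        have h2 := hab t ht.1
        rw [h1]
        linarith
      have hsplit : (∫ t in (0:ℝ)..T, (lamEff t - deriv q t)) =
          (∫ t in (0:ℝ)..T, lamEff t) - (q T - q 0) := by
        rw [intervalIntegral.integral_sub (hI T hT) (hdInt T hT), hFTC]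
      have haff : (∫ t in (0:ℝ)..T, (a * q t + b)) =
          a * (∫ t in (0:ℝ)..T, q t) + b * T := by
        rw [intervalIntegral.integral_add ((hqInt T hT).const_mul a) intervalIntegrable_const,
          intervalIntegral.integral_const_mul, intervalIntegral.integral_const]
        simp [smul_eq_mul]
        ring
      have hineq : (∫ t in (0:ℝ)..T, lamEff t) ≤
          (q T - q 0) + (a * (∫ t in (0:ℝ)..T, q t) + b * T) := by
        rw [hsplit, haff] at hmono; linarith
      have h2 := mul_le_mul_of_nonneg_left hineq (by positivity : (0:ℝ) ≤ 1/T)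
      calc (1/T) * ∫ t in (0:ℝ)..T, lamEff t
          ≤ (1/T) * ((q T - q 0) + (a * (∫ t in (0:ℝ)..T, q t) + b * T)) := h2
        _ = (1/T) * (q T - q 0) + a * ((1/T) * ∫ t in (0:ℝ)..T, q t) + b := by
            field_simp; ring
    have hpart1 : Tendsto (fun T => (1/T) * (q T - q 0)) atTop (nhds 0) := by
      have hlim : Tendsto (fun T : ℝ => n * T⁻¹) atTop (nhds 0) := by
        simpa using tendsto_const_nhds.mul (tendsto_inv_atTop_zero (𝕜 := ℝ))
      apply squeeze_zero_norm' _ hlim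
      · filter_upwards [eventually_ge_atTop 1] with T hT
        have hTpos : (0:ℝ) < T := by linarith
        have hq0 := hq 0 le_rfl
        have hqT := hq T (by linarith)
        have habs : |q T - q 0| ≤ n := abs_le.2 ⟨by linarith, by linarith⟩
        calc ‖(1/T) * (q T - q 0)‖ = (1/T) * |q T - q 0| := by
              rw [Real.norm_eq_abs, abs_mul, abs_of_pos (by positivity : (0:ℝ) < 1/T)]
          _ ≤ (1/T) * n := mul_le_mul_of_nonneg_left habs (by positivity)
          _ = n * T⁻¹ := by ring
    have hRHS : Tendsto (fun T => (1/T) * (q T - q 0) + a * ((1/T) * ∫ t in (0:ℝ)..T, q t) + b)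
        atTop (nhds (0 + a * qbar + b)) :=
      (hpart1.add (tendsto_const_nhds.mul hqbar)).add tendsto_const_nhds
    have hle := le_of_tendsto_of_tendsto hα hRHS
      (by filter_upwards [eventually_ge_atTop 1] with T hT using key T hT)
    linarith
  · -- non-integrable case
    push_neg at hI
    obtain ⟨T₀, hT₀, hnint⟩ := hI
    have hzero : (fun T => (1 / T) * ∫ t in (0:ℝ)..T, lamEff t) =ᶠ[atTop]
        (fun _ => (0:ℝ)) := by
      filter_upwards [eventually_ge_atTop T₀] with T hT
      rw [intervalIntegral.integral_undef, mul_zero]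
      intro hcon
      exact hnint (hcon.mono_set (by
        rw [Set.uIcc_of_le hT₀, Set.uIcc_of_le (hT₀.trans hT)]
        exact Set.Icc_subset_Icc le_rfl hT))
    have h0 : ᾱ * lam = 0 := tendsto_nhds_unique hα (tendsto_const_nhds.congr' hzero.symm)
    linarith

open Filter

theorem littles_law_equilibrium
    (n lam TR τ1 : ℝ) (hn : 0 < n) (hlam : 0 < lam) (hTR : 0 < TR) (hτ : 0 < τ1)
    (q lamEff TP : ℝ → ℝ) (qbar ᾱ : ℝ)
    (hq : ∀ t, 0 ≤ t → 0 ≤ q t ∧ q t < n)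
    (hderiv : ∀ t, 0 ≤ t → HasDerivAt q (lamEff t - q t / (TR + TP t)) t)
    (hlamEff : ∀ t, 0 ≤ t → 0 ≤ lamEff t ∧ lamEff t ≤ lam)
    (hTP : ∀ t, 0 ≤ t → TP t ≥ τ1 / Real.sqrt (n - q t))
    (hqbar : Tendsto (fun T => (1 / T) * ∫ t in (0:ℝ)..T, q t) atTop (nhds qbar))
    (hα : Tendsto (fun T => (1 / T) * ∫ t in (0:ℝ)..T, lamEff t) atTop (nhds (ᾱ * lam))) :
    qbar ≥ ᾱ * lam * (TR + τ1 / Real.sqrt (n - qbar)) := by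
  have hqc : ∀ t, 0 ≤ t → ContinuousAt q t := fun t ht => (hderiv t ht).continuousAt
  have hqInt : ∀ T, 0 ≤ T → IntervalIntegrable q MeasureTheory.volume 0 T := by
    intro T hT
    apply ContinuousOn.intervalIntegrable
    rw [Set.uIcc_of_le hT]
    exact fun t ht => (hqc t ht.1).continuousWithinAt
  have hq0 : 0 ≤ qbar := by
    apply le_of_tendsto_of_tendsto tendsto_const_nhds hqbar
    filter_upwards [eventually_ge_atTop 1] with T hT
    have hT0 : (0:ℝ) ≤ T := by linarith
    have h1 : 0 ≤ ∫ t in (0:ℝ)..T, q t :=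
      intervalIntegral.integral_nonneg hT0 (fun u hu => (hq u hu.1).1)
    positivity
  have hqn : qbar ≤ n := by
    apply le_of_tendsto_of_tendsto hqbar tendsto_const_nhds
    filter_upwards [eventually_ge_atTop 1] with T hT
    have hT0 : (0:ℝ) ≤ T := by linarith
    have hTpos : (0:ℝ) < T := by linarith
    have h1 : (∫ t in (0:ℝ)..T, q t) ≤ ∫ _ in (0:ℝ)..T, n := by
      apply intervalIntegral.integral_mono_on hT0 (hqInt T hT0) intervalIntegrable_const
      exact fun t ht => (hq t ht.1).2.le
    have h2 : (∫ _ in (0:ℝ)..T, n) = T * n := by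
      rw [intervalIntegral.integral_const]; simp
    have h3 := mul_le_mul_of_nonneg_left (h1.trans h2.le) (by positivity : (0:ℝ) ≤ 1/T)
    calc (1/T) * ∫ t in (0:ℝ)..T, q t ≤ (1/T) * (T * n) := h3
      _ = n := by field_simp
  rcases eq_or_lt_of_le hqn with heq | hlt
  · -- qbar = n
    have hkey := llaw_key n lam TR τ1 hn hTR hτ q lamEff TP qbar ᾱ hq hderiv hlamEff hTP
      hqbar hα (1/TR) 0 ?_ ?_
    · rw [heq]
      have h4 : n - n = 0 := sub_self n
      rw [h4, Real.sqrt_zero, div_zero, add_zero]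
      have h3 := mul_le_mul_of_nonneg_right hkey hTR.le
      rw [heq] at h3
      have h5 : ((1/TR) * n + 0) * TR = n := by field_simp; ring
      linarith
    · intro t ht
      have hq' := hq t ht
      have hTPnn : 0 ≤ TP t := le_trans
        (div_nonneg hτ.le (Real.sqrt_nonneg (n - q t))) (hTP t ht)
      calc q t / (TR + TP t) ≤ q t / TR :=
            div_le_div₀ hq'.1 le_rfl hTR (by linarith)
        _ = (1/TR) * q t + 0 := by ring
    · rw [heq]; positivity
  · -- qbar < n
    have hsq : 0 < Real.sqrt (n - qbar) := Real.sqrt_pos.2 (by linarith)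
    have hD : 0 < TR + τ1 / Real.sqrt (n - qbar) := by positivity
    have hkey := llaw_key n lam TR τ1 hn hTR hτ q lamEff TP qbar ᾱ hq hderiv hlamEff hTP
      hqbar hα (llawA n TR τ1 qbar)
      (qbar / (TR + τ1 / Real.sqrt (n - qbar)) - llawA n TR τ1 qbar * qbar) ?_ ?_
    · have hr : llawA n TR τ1 qbar * qbar +
          (qbar / (TR + τ1 / Real.sqrt (n - qbar)) - llawA n TR τ1 qbar * qbar)
          = qbar / (TR + τ1 / Real.sqrt (n - qbar)) := by ring
      rw [hr] at hkey
      exact (le_div_iff₀ hD).1 hkey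
    · intro t ht
      have hq' := hq t ht
      have hsqt : 0 < Real.sqrt (n - q t) := Real.sqrt_pos.2 (by linarith [hq'.2])
      have hposd : 0 < TR + τ1 / Real.sqrt (n - q t) := by positivity
      calc q t / (TR + TP t) ≤ q t / (TR + τ1 / Real.sqrt (n - q t)) :=
            div_le_div₀ hq'.1 le_rfl hposd (by linarith [hTP t ht])
        _ ≤ qbar / (TR + τ1 / Real.sqrt (n - qbar)) +
              llawA n TR τ1 qbar * (q t - qbar) :=
            llaw_tangent n TR τ1 hTR hτ hq'.1 hq'.2 hq0 hlt
        _ = llawA n TR τ1 qbar * q t +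
              (qbar / (TR + τ1 / Real.sqrt (n - qbar)) - llawA n TR τ1 qbar * qbar) := by ring
    · have hr : llawA n TR τ1 qbar * qbar +
          (qbar / (TR + τ1 / Real.sqrt (n - qbar)) - llawA n TR τ1 qbar * qbar)
          = qbar / (TR + τ1 / Real.sqrt (n - qbar)) := by ring
      rw [hr]
      positivity
end

section
/- Let $n > 0$, $T_R, \tau_1 > 0$, and let $q : [0,T] \to [0, n)$ be integrable with average $\bar{q} = \frac{1}{T}\int_0^T q(t)\,dt$. Then $\frac{1}{T}\int_0^T \frac{q(t)}{T_R + \tau_1/\sqrt{n - q(t)}}\,dt \leq \frac{\bar{q}}{T_R + \tau_1/\sqrt{n - \bar{q}}}$. -/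
open MeasureTheory

/-!
With `s = √(n - x)` the integrand is the rational function `(n - s²) s / (T_R s + τ₁)`, and the
tangent line of `x ↦ x / (T_R + τ₁ / √(n - x))` at any point of `(-∞, n)` lies above its graph:
the gap is an explicit square times a positive rational function of `s` and `σ = √(n - y)`.
Integrating the tangent inequality at the average `q̄` gives Jensen's inequality, since the
linear part integrates to zero.
-/

lemma sub_sq_mul_div_le_tangent {b c n s σ : ℝ} (hb : 0 ≤ b) (hc : 0 < c) (hn : 0 ≤ n)
    (hs : 0 < s) (hσ : 0 < σ) :
    (n - s ^ 2) * s / (b * s + c) ≤ (n - σ ^ 2) * σ / (b * σ + c) +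
      (σ / (b * σ + c) - (n - σ ^ 2) * c / (2 * σ * (b * σ + c) ^ 2)) *
        ((n - s ^ 2) - (n - σ ^ 2)) := by
  have hbs : 0 < b * s + c := by positivity
  have hbσ : 0 < b * σ + c := by positivity
  rw [← sub_nonneg]
  have gap : (n - σ ^ 2) * σ / (b * σ + c) +
      (σ / (b * σ + c) - (n - σ ^ 2) * c / (2 * σ * (b * σ + c) ^ 2)) *
        ((n - s ^ 2) - (n - σ ^ 2)) - (n - s ^ 2) * s / (b * s + c) =
      c * (σ - s) ^ 2 * (c * (n + σ ^ 2 + 2 * s * σ) + b * ((2 * σ + s) * n + s * σ ^ 2)) /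
        (2 * σ * (b * σ + c) ^ 2 * (b * s + c)) := by
    field_simp
    ring
  rw [gap]
  positivity

lemma div_add_div_eq_mul_div_mul_add {x b c s : ℝ} (hs : s ≠ 0) :
    x / (b + c / s) = x * s / (b * s + c) := by
  rw [add_div' _ _ _ hs, div_div_eq_mul_div]

lemma div_add_div_sqrt_sub_le_tangent {b c n x y : ℝ} (hb : 0 ≤ b) (hc : 0 < c) (hn : 0 ≤ n)
    (hx : x < n) (hy : y < n) :
    x / (b + c / √(n - x)) ≤ y / (b + c / √(n - y)) +
      (√(n - y) / (b * √(n - y) + c) - y * c / (2 * √(n - y) * (b * √(n - y) + c) ^ 2)) *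
        (x - y) := by
  have hs := Real.sqrt_pos.mpr (sub_pos.mpr hx)
  have hσ := Real.sqrt_pos.mpr (sub_pos.mpr hy)
  have tangent := sub_sq_mul_div_le_tangent hb hc hn hs hσ
  rwa [Real.sq_sqrt (sub_pos.mpr hx).le, Real.sq_sqrt (sub_pos.mpr hy).le, sub_sub_cancel,
    sub_sub_cancel, ← div_add_div_eq_mul_div_mul_add hs.ne',
    ← div_add_div_eq_mul_div_mul_add hσ.ne'] at tangent

lemma one_div_mul_integral_lt_of_forall_lt {q : ℝ → ℝ} {a b n : ℝ} (hab : a < b)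
    (hq : IntervalIntegrable q volume a b) (hlt : ∀ t ∈ Set.Ioo a b, q t < n) :
    1 / (b - a) * ∫ t in a..b, q t < n := by
  have hpos := intervalIntegral.intervalIntegral_pos_of_pos_on (intervalIntegrable_const.sub hq)
    (fun t ht => sub_pos.mpr (hlt t ht)) hab
  rw [intervalIntegral.integral_sub intervalIntegrable_const hq, intervalIntegral.integral_const,
    smul_eq_mul, sub_pos] at hpos
  rw [one_div_mul_eq_div, div_lt_iff₀ (sub_pos.mpr hab)]
  linarith

lemma one_div_mul_integral_comp_le_of_supporting_line {f q : ℝ → ℝ} {a b c m : ℝ} (hab : a < b)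
    (hq : IntervalIntegrable q volume a b)
    (hfq : IntervalIntegrable (fun t => f (q t)) volume a b)
    (hc : c = 1 / (b - a) * ∫ t in a..b, q t)
    (hsupp : ∀ t ∈ Set.Icc a b, f (q t) ≤ f c + m * (q t - c)) :
    1 / (b - a) * ∫ t in a..b, f (q t) ≤ f c := by
  have hq_integral : ∫ t in a..b, q t = (b - a) * c := by
    rw [hc]
    field_simp [(sub_pos.mpr hab).ne']
  have hline : IntervalIntegrable (fun t => f c + m * (q t - c)) volume a b :=
    intervalIntegrable_const.add ((hq.sub intervalIntegrable_const).const_mul m)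
  have line_integral : ∫ t in a..b, (f c + m * (q t - c)) = (b - a) * f c := by
    rw [intervalIntegral.integral_add intervalIntegrable_const
        ((hq.sub intervalIntegrable_const).const_mul m),
      intervalIntegral.integral_const_mul, intervalIntegral.integral_sub hq intervalIntegrable_const,
      intervalIntegral.integral_const, intervalIntegral.integral_const, smul_eq_mul, smul_eq_mul,
      hq_integral]
    ring
  calc 1 / (b - a) * ∫ t in a..b, f (q t)
      ≤ 1 / (b - a) * ∫ t in a..b, (f c + m * (q t - c)) := by
        gcongr 1 / (b - a) * ?_
        exact intervalIntegral.integral_mono_on hab.le hfq hline hsupp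
    _ = f c := by rw [line_integral]; field_simp [(sub_pos.mpr hab).ne']

theorem jensen_concave_pickup (n TR τ1 T : ℝ) (hn : 0 < n) (hTR : 0 < TR)
    (hτ : 0 < τ1) (hT : 0 < T)
    (q : ℝ → ℝ)
    (hq : ∀ t ∈ Set.Icc (0:ℝ) T, 0 ≤ q t ∧ q t < n)
    (hint : IntervalIntegrable q MeasureTheory.volume 0 T)
    (hint2 : IntervalIntegrable (fun t => q t / (TR + τ1 / Real.sqrt (n - q t)))
      MeasureTheory.volume 0 T)
    (qbar : ℝ) (hqbar : qbar = (1 / T) * ∫ t in (0:ℝ)..T, q t) :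
    (1 / T) * ∫ t in (0:ℝ)..T, q t / (TR + τ1 / Real.sqrt (n - q t))
      ≤ qbar / (TR + τ1 / Real.sqrt (n - qbar)) := by
  have hqbar_lt : qbar < n := by
    rw [hqbar]
    simpa only [sub_zero] using one_div_mul_integral_lt_of_forall_lt hT hint
      (fun t ht => (hq t (Set.Ioo_subset_Icc_self ht)).2)
  have jensen := one_div_mul_integral_comp_le_of_supporting_line
    (f := fun x => x / (TR + τ1 / √(n - x))) hT hint hint2 (by rwa [sub_zero])
    (fun t ht => div_add_div_sqrt_sub_le_tangent hTR.le hτ hn.le (hq t ht).2 hqbar_lt)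
  simpa only [sub_zero] using jensen
end

section
/- Let $\mu_l, r, \lambda, n > 0$ with $a = \frac{(1+r)\lambda}{n\mu_l} \neq 1$, and let $L \geq 1$ be an integer. Suppose reals $\bar{X}^C_0 \leq \bar{X}^C_1 \leq \cdots \leq \bar{X}^C_L$ and $\bar{X}^B_L \geq 0$ satisfy $n \leq \frac{r+1}{r}\bar{X}^C_L$, $\bar{X}^C_j - \bar{X}^C_{j-1} \leq a^{L-j}(\bar{X}^C_L - \bar{X}^C_{L-1})$ for $1 \leq j \leq L-1$, and $\bar{X}^C_0 \leq a^L(\bar{X}^C_L - \bar{X}^C_{L-1})$. Then $\bar{X}^C_L - \bar{X}^C_{L-1} \geq \frac{n r}{1+r} \cdot \frac{1 - a}{1 - a^{L+1}}$. -/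
/-!
Telescoping from `X₀` up to `X_L`, the hypotheses bound every increment (and `X₀` itself) by a
power of `a` times the top gap `g = X_L - X_{L-1}`, so `X_L ≤ (1 + a + ⋯ + a^L) g`. Since
`X_L ≥ n r / (1 + r)` and `(1 + a + ⋯ + a^L)(1 - a) = 1 - a^(L+1)`, the bound on `g` follows.
-/

open Finset

theorem le_geom_sum_mul_of_sub_le {x : ℕ → ℝ} {a g : ℝ} {L : ℕ}
    (hstep : ∀ j < L, x (j + 1) - x j ≤ a ^ (L - 1 - j) * g) (h0 : x 0 ≤ a ^ L * g) :
    x L ≤ (∑ k ∈ range (L + 1), a ^ k) * g := by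
  have hsum : ∑ j ∈ range L, (x (j + 1) - x j) ≤ ∑ j ∈ range L, a ^ j * g := by
    rw [← sum_range_reflect (fun j => a ^ j * g) L]
    exact sum_le_sum fun j hj => hstep j (mem_range.mp hj)
  calc x L = x 0 + ∑ j ∈ range L, (x (j + 1) - x j) := by rw [sum_range_sub]; ring
    _ ≤ a ^ L * g + ∑ j ∈ range L, a ^ j * g := add_le_add h0 hsum
    _ = (∑ k ∈ range (L + 1), a ^ k) * g := by rw [sum_range_succ, add_mul, sum_mul, add_comm]

theorem div_one_sub_pow_succ_eq_inv_geom_sum {a : ℝ} (hane : a ≠ 1) (L : ℕ) :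
    (1 - a) / (1 - a ^ (L + 1)) = (∑ k ∈ range (L + 1), a ^ k)⁻¹ := by
  rw [← geom_sum_mul_neg, div_mul_cancel_right₀ (sub_ne_zero.mpr hane.symm)]

theorem closest_dispatch_gap_general
    (μl r lam n : ℝ) (hμ : 0 < μl) (hr : 0 < r) (hlam : 0 < lam) (hn : 0 < n)
    (L : ℕ)
    (a : ℝ) (ha : a = (1 + r) * lam / (n * μl)) (hane : a ≠ 1)
    (XC : ℕ → ℝ)
    (hn' : n ≤ (r + 1) / r * XC L)
    (hdiff : ∀ j, 1 ≤ j → j ≤ L - 1 →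
      XC j - XC (j - 1) ≤ a ^ (L - j) * (XC L - XC (L - 1)))
    (h0 : XC 0 ≤ a ^ L * (XC L - XC (L - 1))) :
    XC L - XC (L - 1) ≥ n * r / (1 + r) * ((1 - a) / (1 - a ^ (L + 1))) := by
  have ha0 : 0 < a := ha ▸ by positivity
  have hS : 0 < ∑ k ∈ range (L + 1), a ^ k := geom_sum_pos ha0.le L.succ_ne_zero
  have hXL : n * r / (1 + r) ≤ XC L := by
    rw [div_mul_eq_mul_div, le_div_iff₀ hr] at hn'
    rw [div_le_iff₀ (by positivity)]
    linarith
  have hstep : ∀ j < L, XC (j + 1) - XC j ≤ a ^ (L - 1 - j) * (XC L - XC (L - 1)) := by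
    intro j hj
    rcases (Nat.succ_le_of_lt hj).eq_or_lt with hjL | hjL
    · obtain rfl : L = j + 1 := hjL.symm
      simp
    · simpa [show L - (j + 1) = L - 1 - j by omega] using hdiff (j + 1) le_add_self (by omega)
  rw [div_one_sub_pow_succ_eq_inv_geom_sum hane, ← div_eq_mul_inv, ge_iff_le, div_le_iff₀' hS]
  exact hXL.trans (le_geom_sum_mul_of_sub_le hstep h0)

theorem closest_dispatch_gap
    (μl r lam n : ℝ) (hμ : 0 < μl) (hr : 0 < r) (hlam : 0 < lam) (hn : 0 < n)
    (L : ℕ) (hL : 1 ≤ L)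
    (a : ℝ) (ha : a = (1 + r) * lam / (n * μl)) (hane : a ≠ 1)
    (XC : ℕ → ℝ) (XB : ℝ) (hXB : 0 ≤ XB)
    (hmono : ∀ j, j < L → XC j ≤ XC (j + 1))
    (hn' : n ≤ (r + 1) / r * XC L)
    (hdiff : ∀ j, 1 ≤ j → j ≤ L - 1 →
      XC j - XC (j - 1) ≤ a ^ (L - j) * (XC L - XC (L - 1)))
    (h0 : XC 0 ≤ a ^ L * (XC L - XC (L - 1))) :
    XC L - XC (L - 1) ≥ n * r / (1 + r) * ((1 - a) / (1 - a ^ (L + 1))) :=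
  closest_dispatch_gap_general μl r lam n hμ hr hlam hn L a ha hane XC hn' hdiff h0
end
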